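/- Let X be a smooth projective surface, W obtained by contracting a configuration E with φ*K_W = K_X + E, E² = −1, K_X·E = 1, K_X² = 0 and K_W² = 1. If X is not minimal and its minimal model S has 0 < K_S² ≤ 1 so that X → S is a single blow-up with exceptional (−1)-curve G, and m = G·E ≥ 2, then the image Ē = f_*E satisfies K_S·Ē = 1 − m < 0, contradicting nefness of K_S. Hence if X has general type and K_X² = 0, K_X·E = 1, E² = −1, K_W² = 1 with K_W ample, a contradiction arises, so X is not of general type. -/

import Mathlib

theorem inter_pullback_eq_one_sub {D : Type*} [AddCommGroup D] (i : D → D → ℤ)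
    (haddl : ∀ a b c : D, i (a + b) c = i a c + i b c)
    (haddr : ∀ a b c : D, i a (b + c) = i a b + i a c)
    (hsmulr : ∀ (n : ℤ) (a b : D), i a (n • b) = n * i a b)
    {KX fKS E G : D} {m : ℤ} (hKXE : i KX E = 1) (hKX : KX = fKS + G)
    (hproj : i fKS G = 0) (hGE : i G E = m) :
    i fKS (E + m • G) = 1 - m := by
  have hKSE : i fKS E = 1 - m := by
    rw [hKX, haddl, hGE] at hKXE
    omega
  rw [haddr, hsmulr, hproj, hKSE, mul_zero, add_zero]

/-- `i` is the intersection pairing on divisor classes of X, `fKS = f*K_S` and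
`fEbar = f*Ē`, so that `i fKS fEbar = K_S·Ē`. -/
theorem stmt5_general {D : Type*} [AddCommGroup D] (i : D → D → ℤ)
    (haddl : ∀ a b c : D, i (a + b) c = i a c + i b c)
    (haddr : ∀ a b c : D, i a (b + c) = i a b + i a c)
    (hsmulr : ∀ (n : ℤ) (a b : D), i a (n • b) = n * i a b)
    (KX fKS E G fEbar : D) (m : ℤ)
    (hKXE : i KX E = 1)
    (hKX : KX = fKS + G)
    (hfE : fEbar = E + m • G)
    (hproj : i fKS G = 0)      -- projection formula: f*K_S · G = 0
    (hGE : i G E = m)          -- definition of m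
    (hm : 2 ≤ m)               -- forced by ampleness of K_W
    (hnef : 0 ≤ i fKS fEbar)   -- K_S nef
    : False := by
  have hKSEbar : i fKS fEbar = 1 - m := by
    rw [hfE]
    exact inter_pullback_eq_one_sub i haddl haddr hsmulr hKXE hKX hproj hGE
  omega

/-- The intersection-theoretic contradiction excluding general type.
`i` is the intersection pairing on divisor classes of the smooth surface X,
`fKS = f*K_S`, `fEbar = f*Ē`.  From K_X = f*K_S + G, f*Ē = E + mG, K_X·E = 1,
K_X·G = −1, f*K_S·G = 0 and m = G·E ≥ 2 (ampleness of K_W) one gets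
K_S·Ē = f*K_S·f*Ē = 1 − m < 0, contradicting nefness of K_S. -/
theorem stmt5 {D : Type*} [AddCommGroup D] (i : D → D → ℤ)
    (haddl : ∀ a b c : D, i (a + b) c = i a c + i b c)
    (haddr : ∀ a b c : D, i a (b + c) = i a b + i a c)
    (hsmulr : ∀ (n : ℤ) (a b : D), i a (n • b) = n * i a b)
    (KX fKS E G fEbar : D) (m : ℤ)
    (hKXE : i KX E = 1)
    (hKXG : i KX G = -1)
    (hKX : KX = fKS + G)
    (hfE : fEbar = E + m • G)
    (hproj : i fKS G = 0)      -- projection formula: f*K_S · G = 0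
    (hGE : i G E = m)          -- definition of m
    (hm : 2 ≤ m)               -- forced by ampleness of K_W
    (hnef : 0 ≤ i fKS fEbar)   -- K_S nef
    : False :=
  stmt5_general i haddl haddr hsmulr KX fKS E G fEbar m hKXE hKX hfE hproj hGE hm hnef
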